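/- arXiv:1705.07268 — 2 statements merged into one kernel-verified Lean document; each statement's English description precedes it below -/
import Mathlib

section
/- The symmetric bilinear form B(X,Y) = tr(X·Y), restricted to the subspace t = {X ∈ sp_{2n}(𝔽) : X·β = β·X} of sp_{2n}(𝔽), is non-degenerate. -/
/-!
Since `β.charpoly` is irreducible, `K = 𝔽[t]/(β.charpoly)` is a field acting on `𝔽^{2n}` through
`t ↦ β`, and `𝔽^{2n}` is one-dimensional over it. Hence every `X` commuting with `β` is `c(β)` for
some `c ∈ K`, and `tr (p(β)) = Tr_{K/𝔽} p`. If `X ∈ sp_{2n}` commutes with `β` and is orthogonal to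
the whole centralizer, then `tr (β^k X²) = 0` for every `k`: for even `k` because `β^k X` lies in
the centralizer, for odd `k` because `β^k X²` lies in `sp_{2n}`, whose elements are traceless in odd
characteristic. Thus `Tr_{K/𝔽} (c² p) = 0` for all `p`, and the trace form of `K/𝔽` is
non-degenerate because `𝔽` is perfect, so `c² = 0` and `X = 0`.
-/

open Matrix

/-- The matrix `J = [[0, I'ₙ],[−I'ₙ, 0]]` where `I'ₙ` is the antidiagonal identity. -/
def Jmat (R : Type*) [CommRing R] (n : ℕ) : Matrix (Fin (2*n)) (Fin (2*n)) R :=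
  Matrix.of fun i j =>
    if (i : ℕ) + (j : ℕ) = 2*n - 1 then (if (i : ℕ) < n then (1 : R) else -1) else 0

/-- The symplectic group `Sp_{2n}(R)` as a set of matrices. -/
def SpSet (n : ℕ) (R : Type*) [CommRing R] : Set (Matrix (Fin (2*n)) (Fin (2*n)) R) :=
  {g | IsUnit g.det ∧ g * Jmat R n * gᵀ = Jmat R n}

/-- The symplectic Lie algebra `sp_{2n}(R)` as a set of matrices. -/
def spSet (n : ℕ) (R : Type*) [CommRing R] : Set (Matrix (Fin (2*n)) (Fin (2*n)) R) :=
  {X | X * Jmat R n + Jmat R n * Xᵀ = 0}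

open Polynomial

namespace Matrix

section IrreducibleCharpoly

variable {𝔽 ι : Type*} [Field 𝔽] [Fintype ι] [DecidableEq ι] (β : Matrix ι ι 𝔽)

noncomputable def charpolyLift : AdjoinRoot β.charpoly →ₐ[𝔽] Matrix ι ι 𝔽 :=
  Ideal.Quotient.liftₐ _ (aeval β) fun p hp => by
    obtain ⟨q, rfl⟩ := Ideal.mem_span_singleton'.mp hp
    rw [map_mul, aeval_self_charpoly, mul_zero]

theorem charpolyLift_mk (p : 𝔽[X]) : charpolyLift β (AdjoinRoot.mk _ p) = aeval β p := rfl

noncomputable def charpolyOrbit (v : ι → 𝔽) : AdjoinRoot β.charpoly →ₗ[𝔽] ι → 𝔽 :=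
  LinearMap.applyₗ v ∘ₗ toLin'.toLinearMap ∘ₗ (charpolyLift β).toLinearMap

theorem charpolyOrbit_apply (v : ι → 𝔽) (k : AdjoinRoot β.charpoly) :
    charpolyOrbit β v k = charpolyLift β k *ᵥ v := rfl

variable {β}

theorem commute_charpolyLift {X : Matrix ι ι 𝔽} (hX : Commute X β) (k : AdjoinRoot β.charpoly) :
    Commute X (charpolyLift β k) := by
  obtain ⟨p, rfl⟩ := AdjoinRoot.mk_surjective k
  exact Algebra.commute_of_mem_adjoin_singleton_of_commute (aeval_mem_adjoin_singleton 𝔽 β) hX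

theorem finrank_adjoinRoot_charpoly :
    Module.finrank 𝔽 (AdjoinRoot β.charpoly) = Fintype.card ι := by
  rw [← charpoly_natDegree_eq_dim β]
  exact finrank_quotient_span_eq_natDegree

theorem nonempty_of_irreducible_charpoly (hirr : Irreducible β.charpoly) : Nonempty ι := by
  have := hirr.natDegree_pos
  rw [charpoly_natDegree_eq_dim] at this
  exact Fintype.card_pos_iff.mp this

theorem charpolyOrbit_bijective (hirr : Irreducible β.charpoly) {v : ι → 𝔽} (hv : v ≠ 0) :
    Function.Bijective (charpolyOrbit β v) := by
  have : Fact (Irreducible β.charpoly) := ⟨hirr⟩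
  have : Module.Finite 𝔽 (AdjoinRoot β.charpoly) := (charpoly_monic β).finite_adjoinRoot
  have hinj : Function.Injective (charpolyOrbit β v) := by
    refine (injective_iff_map_eq_zero _).mpr fun k hk => ?_
    by_contra hk0
    have : charpolyLift β k⁻¹ * charpolyLift β k = 1 := by
      rw [← map_mul, inv_mul_cancel₀ hk0, map_one]
    apply hv
    rw [← one_mulVec v, ← this, ← mulVec_mulVec, ← charpolyOrbit_apply β v k, hk, mulVec_zero]
  refine ⟨hinj, (LinearMap.injective_iff_surjective_of_finrank_eq_finrank ?_).mp hinj⟩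
  rw [Module.finrank_pi, finrank_adjoinRoot_charpoly]

theorem exists_eq_charpolyLift_of_commute (hirr : Irreducible β.charpoly) {X : Matrix ι ι 𝔽}
    (hX : Commute X β) : ∃ c, X = charpolyLift β c := by
  have := nonempty_of_irreducible_charpoly hirr
  obtain ⟨v, hv⟩ := exists_ne (0 : ι → 𝔽)
  have hbij := charpolyOrbit_bijective hirr hv
  obtain ⟨c, hc⟩ := hbij.2 (X *ᵥ v)
  refine ⟨c, toLin'.injective (LinearMap.ext fun w => ?_)⟩
  obtain ⟨k, rfl⟩ := hbij.2 w
  simp only [toLin'_apply, charpolyOrbit_apply] at hc ⊢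
  rw [mulVec_mulVec, (commute_charpolyLift hX k).eq, ← mulVec_mulVec, ← hc, mulVec_mulVec,
    mulVec_mulVec, ← map_mul, ← map_mul, mul_comm]

theorem trace_charpolyLift (hirr : Irreducible β.charpoly) (a : AdjoinRoot β.charpoly) :
    (charpolyLift β a).trace = Algebra.trace 𝔽 _ a := by
  have := nonempty_of_irreducible_charpoly hirr
  obtain ⟨v, hv⟩ := exists_ne (0 : ι → 𝔽)
  let e := LinearEquiv.ofBijective _ (charpolyOrbit_bijective hirr hv)
  have hconj : e.conj (Algebra.lmul 𝔽 _ a) = toLin' (charpolyLift β a) := by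
    refine LinearMap.ext fun w => ?_
    obtain ⟨k, rfl⟩ := e.surjective w
    rw [LinearEquiv.conj_apply_apply, e.symm_apply_apply]
    simp [e, charpolyOrbit_apply, mulVec_mulVec]
  rw [Algebra.trace_apply, ← LinearMap.trace_conj' _ e, hconj, trace_toLin'_eq]

theorem eq_zero_of_forall_trace_pow_mul_self_eq_zero [PerfectField 𝔽]
    (hirr : Irreducible β.charpoly) {X : Matrix ι ι 𝔽} (hX : Commute X β)
    (h : ∀ k : ℕ, (β ^ k * (X * X)).trace = 0) : X = 0 := by
  have : Fact (Irreducible β.charpoly) := ⟨hirr⟩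
  have : Module.Finite 𝔽 (AdjoinRoot β.charpoly) := (charpoly_monic β).finite_adjoinRoot
  have haeval : ∀ p : 𝔽[X], (aeval β p * (X * X)).trace = 0 := by
    intro p
    simp [aeval_eq_sum_range, Finset.sum_mul, trace_sum, h]
  obtain ⟨c, rfl⟩ := exists_eq_charpolyLift_of_commute hirr hX
  suffices c * c = 0 by rw [mul_self_eq_zero.mp this, map_zero]
  refine (traceForm_nondegenerate 𝔽 _).1 _ fun k => ?_
  obtain ⟨p, rfl⟩ := AdjoinRoot.mk_surjective k
  rw [Algebra.traceForm_apply, ← trace_charpolyLift hirr, map_mul, charpolyLift_mk, trace_mul_comm,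
    map_mul, haeval]

end IrreducibleCharpoly

end Matrix

section TwistedSymmetric

/- `A * J = a • (J * Aᵀ)` says `A = a • J Aᵀ J⁻¹`, i.e. `A` is `a` times its adjoint for the form
with Gram matrix `J⁻¹`; `sp_{2n}` is the case `J = Jmat`, `a = -1`. -/

variable {R ι : Type*} [CommRing R] [Fintype ι] {J A B : Matrix ι ι R} {a b : R}

theorem mul_mul_eq_smul_of_commute (hA : A * J = a • (J * Aᵀ)) (hB : B * J = b • (J * Bᵀ))
    (hAB : Commute A B) : A * B * J = (a * b) • (J * (A * B)ᵀ) := by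
  rw [mul_assoc, hB, Matrix.mul_smul, ← mul_assoc, hA, Matrix.smul_mul, smul_smul, mul_assoc,
    ← transpose_mul, hAB.eq, mul_comm b]

theorem pow_mul_eq_smul [DecidableEq ι] (hA : A * J = a • (J * Aᵀ)) (k : ℕ) :
    A ^ k * J = a ^ k • (J * (A ^ k)ᵀ) := by
  induction k with
  | zero => simp
  | succ k ih =>
    rw [pow_succ, pow_succ]
    exact mul_mul_eq_smul_of_commute ih hA (Commute.self_pow A k).symm

end TwistedSymmetric

section Symplectic

variable {R : Type*} [CommRing R] {n : ℕ}

theorem Jmat_mul_Jmat : Jmat R n * Jmat R n = -1 := by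
  ext i j
  have hi := i.is_lt
  rw [mul_apply, Finset.sum_eq_single (⟨2 * n - 1 - i, by omega⟩ : Fin (2 * n))]
  · by_cases hij : i = j
    · subst hij
      have h₁ : 2 * n - 1 - i + (i : ℕ) = 2 * n - 1 := by omega
      have h₂ : (i : ℕ) + (2 * n - 1 - i) = 2 * n - 1 := by omega
      have h₃ : 2 * n - 1 - i < n ↔ ¬(i : ℕ) < n := by omega
      by_cases hin : (i : ℕ) < n <;> simp [Jmat, hin, h₁, h₂, h₃]
    · have : ¬(2 * n - 1 - i + (j : ℕ) = 2 * n - 1) := fun h => hij (Fin.ext (by omega))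
      simp [Jmat, hij, this]
  · intro k _ hk
    have : ¬((i : ℕ) + k = 2 * n - 1) := fun h =>
      hk (Fin.ext (show (k : ℕ) = 2 * n - 1 - i by omega))
    simp [Jmat, this]
  · simp

theorem mem_spSet_iff {X : Matrix (Fin (2 * n)) (Fin (2 * n)) R} :
    X ∈ spSet n R ↔ X * Jmat R n = (-1 : R) • (Jmat R n * Xᵀ) := by
  rw [spSet, Set.mem_ofPred_eq, neg_one_smul, add_eq_zero_iff_eq_neg]

variable {β X : Matrix (Fin (2 * n)) (Fin (2 * n)) R} {k : ℕ}

theorem pow_mul_mem_spSet (hβ : β ∈ spSet n R) (hX : X ∈ spSet n R) (hXβ : Commute X β)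
    (hk : Even k) : β ^ k * X ∈ spSet n R := by
  rw [mem_spSet_iff] at hβ hX ⊢
  have := mul_mul_eq_smul_of_commute (pow_mul_eq_smul hβ k) hX (hXβ.pow_right k).symm
  rwa [hk.neg_one_pow, one_mul] at this

theorem pow_mul_mul_self_mem_spSet (hβ : β ∈ spSet n R) (hX : X ∈ spSet n R)
    (hXβ : Commute X β) (hk : Odd k) : β ^ k * (X * X) ∈ spSet n R := by
  rw [mem_spSet_iff] at hβ hX ⊢
  have := mul_mul_eq_smul_of_commute (pow_mul_eq_smul hβ k)
    (mul_mul_eq_smul_of_commute hX hX (Commute.refl X)) ((hXβ.mul_left hXβ).pow_right k).symm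
  rwa [hk.neg_one_pow, mul_neg_one, neg_neg, mul_one] at this

theorem trace_eq_zero_of_mem_spSet {𝔽 : Type*} [Field 𝔽] (hchar : ringChar 𝔽 ≠ 2)
    {X : Matrix (Fin (2 * n)) (Fin (2 * n)) 𝔽} (hX : X ∈ spSet n 𝔽) : X.trace = 0 := by
  have hconj : X = Jmat 𝔽 n * Xᵀ * Jmat 𝔽 n := by
    rw [mem_spSet_iff, neg_one_smul] at hX
    calc X = -(X * (Jmat 𝔽 n * Jmat 𝔽 n)) := by rw [Jmat_mul_Jmat, mul_neg_one, neg_neg]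
      _ = _ := by rw [← mul_assoc, hX, neg_mul, neg_neg]
  have : X.trace = -X.trace := by
    conv_lhs => rw [hconj, trace_mul_cycle, Jmat_mul_Jmat, neg_one_mul, trace_neg, trace_transpose]
  have htwo : (2 : 𝔽) * X.trace = 0 := by rwa [two_mul, ← eq_neg_iff_add_eq_zero]
  exact (mul_eq_zero.mp htwo).resolve_left (Ring.two_ne_zero hchar)

end Symplectic

theorem stmt5_general (n : ℕ) (𝔽 : Type*) [Field 𝔽] [Finite 𝔽]
    (hchar : ringChar 𝔽 ≠ 2)
    (β : Matrix (Fin (2*n)) (Fin (2*n)) 𝔽) (hβ : β ∈ spSet n 𝔽)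
    (hirr : Irreducible β.charpoly) :
    ∀ X, X ∈ spSet n 𝔽 → X * β = β * X →
      (∀ Y, Y ∈ spSet n 𝔽 → Y * β = β * Y → (X * Y).trace = 0) → X = 0 := by
  intro X hX hXβ hB
  refine eq_zero_of_forall_trace_pow_mul_self_eq_zero hirr hXβ fun k => ?_
  rcases k.even_or_odd with hk | hk
  · rw [← mul_assoc, trace_mul_comm]
    exact hB _ (pow_mul_mem_spSet hβ hX hXβ hk) (((Commute.refl β).pow_left k).mul_left hXβ).eq
  · exact trace_eq_zero_of_mem_spSet hchar (pow_mul_mul_self_mem_spSet hβ hX hXβ hk)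

/-- The trace form `B(X,Y) = tr(XY)` restricted to the centralizer of `β` in
`sp_{2n}(𝔽)` is non-degenerate. -/
theorem stmt5 (n : ℕ) (hn : 1 ≤ n) (𝔽 : Type*) [Field 𝔽] [Finite 𝔽]
    (hchar : ringChar 𝔽 ≠ 2)
    (β : Matrix (Fin (2*n)) (Fin (2*n)) 𝔽) (hβ : β ∈ spSet n 𝔽)
    (hirr : Irreducible β.charpoly) :
    ∀ X, X ∈ spSet n 𝔽 → X * β = β * X →
      (∀ Y, Y ∈ spSet n 𝔽 → Y * β = β * Y → (X * Y).trace = 0) → X = 0 :=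
  stmt5_general n 𝔽 hchar β hβ hirr
end

section
/- Let r > 1 and write r = l + l' with l the smallest integer such that 0 < l' ≤ l. Let β̄ denote the reduction of β modulo ϖ^r. Then {g ∈ Sp_{2n}(O/ϖ^r O) : g·β̄ ≡ β̄·g (mod ϖ^{l'})} equals the set of products t·h where t ∈ Sp_{2n}(O/ϖ^r O) lies in the subring of M_{2n}(O/ϖ^r O) generated by β̄ and h ∈ Sp_{2n}(O/ϖ^r O) satisfies h ≡ 1_{2n} (mod ϖ^{l'}). -/
/-!
Write `σ X = J Xᵀ J⁻¹`, so that `Sp_{2n} = {g | g * σ g = 1}` and `σ (P(β)) = P(-β)` for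
`β ∈ sp_{2n}`. Since the characteristic polynomial of `β` is irreducible modulo `ϖ`, the vector
`e₀` is cyclic for `β` modulo `ϖ`, hence modulo `ϖ^{l'}`, and every matrix commuting with `β`
modulo `ϖ^{l'}` is congruent to a polynomial `a = P(β)` there. For `g` symplectic this makes
`e = a * σ a - 1 ≡ g * σ g - 1 = 0`, so `e³ = 0` because `r ≤ 3 l'`; as `q` is odd, `2` is
invertible and `t = a (1 + e)^(-1/2)`, computed with the binomial series truncated at `e³`, is a
symplectic polynomial in `β` congruent to `g`. Then `g = t * (σ t * g)` with `σ t * g ≡ 1`.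
-/

open Matrix Polynomial

section Symplectic

theorem Jmat_mul_self (R : Type*) [CommRing R] (n : ℕ) : Jmat R n * Jmat R n = -1 := by
  ext i j
  rw [mul_apply, Finset.sum_eq_single ⟨2 * n - 1 - i, by omega⟩]
  · rw [neg_apply, one_apply]
    simp only [Jmat, of_apply, Fin.ext_iff]
    split_ifs <;> first | omega | simp
  · intro k _ hk
    rw [Jmat, of_apply, if_neg, zero_mul]
    exact fun h => hk (Fin.ext (by simp; omega))
  · simp

variable {R S : Type*} [CommRing R] [CommRing S] {n : ℕ}

theorem Jmat_map (f : R →+* S) : (Jmat R n).map f = Jmat S n := by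
  ext i j
  simp [Jmat, apply_ite f]

/-- `J Xᵀ J⁻¹`, written with `J⁻¹ = -J`. -/
def sympAdjoint (X : Matrix (Fin (2*n)) (Fin (2*n)) R) : Matrix (Fin (2*n)) (Fin (2*n)) R :=
  -(Jmat R n * Xᵀ * Jmat R n)

theorem sympAdjoint_add (X Y : Matrix (Fin (2*n)) (Fin (2*n)) R) :
    sympAdjoint (X + Y) = sympAdjoint X + sympAdjoint Y := by
  simp only [sympAdjoint, transpose_add, Matrix.mul_add, Matrix.add_mul, neg_add]

theorem sympAdjoint_smul (a : R) (X : Matrix (Fin (2*n)) (Fin (2*n)) R) :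
    sympAdjoint (a • X) = a • sympAdjoint X := by
  simp only [sympAdjoint, transpose_smul, Matrix.mul_smul, Matrix.smul_mul, smul_neg]

theorem sympAdjoint_one : sympAdjoint (1 : Matrix (Fin (2*n)) (Fin (2*n)) R) = 1 := by
  simp [sympAdjoint, Jmat_mul_self]

theorem sympAdjoint_mul (X Y : Matrix (Fin (2*n)) (Fin (2*n)) R) :
    sympAdjoint (X * Y) = sympAdjoint Y * sympAdjoint X := by
  have hJ := Jmat_mul_self R n
  simp only [sympAdjoint, transpose_mul, neg_mul_neg, Matrix.mul_assoc]
  rw [← Matrix.mul_assoc (Jmat R n) (Jmat R n), hJ]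
  simp

theorem sympAdjoint_pow (X : Matrix (Fin (2*n)) (Fin (2*n)) R) (k : ℕ) :
    sympAdjoint (X ^ k) = sympAdjoint X ^ k := by
  induction k with
  | zero => exact sympAdjoint_one
  | succ k ih => rw [pow_succ, sympAdjoint_mul, ih, pow_succ']

theorem sympAdjoint_map (f : R →+* S) (X : Matrix (Fin (2*n)) (Fin (2*n)) R) :
    (sympAdjoint X).map f = sympAdjoint (X.map f) := by
  simp only [sympAdjoint, ← RingHom.mapMatrix_apply, map_neg, map_mul]
  simp only [RingHom.mapMatrix_apply, Jmat_map, transpose_map]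

theorem map_mem_spSet (f : R →+* S) {β : Matrix (Fin (2*n)) (Fin (2*n)) R}
    (hβ : β ∈ spSet n R) : β.map f ∈ spSet n S := by
  have := congrArg f.mapMatrix hβ
  simp only [map_add, map_mul, map_zero, RingHom.mapMatrix_apply, Jmat_map, transpose_map] at this
  exact this

theorem sympAdjoint_eq_neg_of_mem_spSet {β : Matrix (Fin (2*n)) (Fin (2*n)) R}
    (hβ : β ∈ spSet n R) : sympAdjoint β = -β := by
  have hJβ : Jmat R n * βᵀ = -(β * Jmat R n) := eq_neg_of_add_eq_zero_right hβ
  rw [sympAdjoint, hJβ, Matrix.neg_mul, neg_neg, Matrix.mul_assoc, Jmat_mul_self, Matrix.mul_neg,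
    Matrix.mul_one]

theorem sympAdjoint_aeval {β : Matrix (Fin (2*n)) (Fin (2*n)) R} (hβ : β ∈ spSet n R)
    (P : R[X]) : sympAdjoint (aeval β P) = aeval β (P.comp (-X)) := by
  rw [aeval_comp, map_neg, aeval_X, ← sympAdjoint_eq_neg_of_mem_spSet hβ]
  induction P using Polynomial.induction_on' with
  | add p q hp hq => simp only [map_add, sympAdjoint_add, hp, hq]
  | monomial k a =>
    simp only [aeval_monomial, ← Algebra.smul_def, sympAdjoint_smul, sympAdjoint_pow]

theorem mem_SpSet_iff {g : Matrix (Fin (2*n)) (Fin (2*n)) R} :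
    g ∈ SpSet n R ↔ g * sympAdjoint g = 1 := by
  have hJ := Jmat_mul_self R n
  constructor
  · rintro ⟨-, hg⟩
    rw [sympAdjoint, Matrix.mul_neg, ← Matrix.mul_assoc, ← Matrix.mul_assoc, hg, hJ, neg_neg]
  · intro hg
    refine ⟨isUnit_det_of_right_inverse hg, ?_⟩
    calc g * Jmat R n * gᵀ = g * sympAdjoint g * Jmat R n := by
          simp [sympAdjoint, Matrix.mul_assoc, hJ]
      _ = Jmat R n := by rw [hg, Matrix.one_mul]

theorem sympAdjoint_mul_self_of_mem {g : Matrix (Fin (2*n)) (Fin (2*n)) R} (hg : g ∈ SpSet n R) :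
    sympAdjoint g * g = 1 :=
  mul_eq_one_comm.mp (mem_SpSet_iff.mp hg)

theorem sympAdjoint_mem_SpSet {g : Matrix (Fin (2*n)) (Fin (2*n)) R} (hg : g ∈ SpSet n R) :
    sympAdjoint g ∈ SpSet n R := by
  rw [mem_SpSet_iff, ← sympAdjoint_mul, sympAdjoint_mul_self_of_mem hg, sympAdjoint_one]

theorem mul_mem_SpSet {g h : Matrix (Fin (2*n)) (Fin (2*n)) R} (hg : g ∈ SpSet n R)
    (hh : h ∈ SpSet n R) : g * h ∈ SpSet n R := by
  rw [mem_SpSet_iff] at *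
  rw [sympAdjoint_mul, Matrix.mul_assoc, ← Matrix.mul_assoc h, hh, Matrix.one_mul, hg]

end Symplectic

section InvSqrt

variable {A B : Type*} [CommRing A] [CommRing B]

/-- For `2 * h = 1` this is the binomial series of `(1 + x)^(-1/2)` truncated at `x ^ 3`. -/
def truncInvSqrt (h x : A) : A := 1 - h * x + 3 * h ^ 3 * x ^ 2

theorem one_add_mul_truncInvSqrt_sq {h : A} (hh : 2 * h = 1) (x : A) :
    ∃ w, (1 + x) * truncInvSqrt h x ^ 2 = 1 + x ^ 3 * w :=
  ⟨h ^ 2 + 6 * h ^ 3 - 6 * h ^ 4 + (9 * h ^ 6 - 6 * h ^ 4) * x + 9 * h ^ 6 * x ^ 2, by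
    unfold truncInvSqrt
    linear_combination (-x + h * (3 * h + 2) * x ^ 2) * hh⟩

theorem truncInvSqrt_sub_one (h x : A) : truncInvSqrt h x - 1 = x * (3 * h ^ 3 * x - h) := by
  unfold truncInvSqrt; ring

theorem map_truncInvSqrt (f : A →+* B) (h x : A) :
    f (truncInvSqrt h x) = truncInvSqrt (f h) (f x) := by
  simp [truncInvSqrt, map_ofNat]

end InvSqrt

namespace Matrix

variable {S T F : Type*} [CommRing S] [CommRing T] [Field F] {N : ℕ}

theorem pow_eq_zero_of_map_eq_zero {m : Type*} [Fintype m] [DecidableEq m] (π : S →+* T)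
    {k : ℕ} (hk : RingHom.ker π ^ k = ⊥)
    {M : Matrix m m S} (hM : M.map π = 0) : M ^ k = 0 := by
  have hentries : ∀ j a b, (M ^ j) a b ∈ RingHom.ker π ^ j := by
    intro j
    induction j with
    | zero => simp
    | succ j ih =>
      intro a b
      rw [pow_succ M, mul_apply, pow_succ (RingHom.ker π)]
      refine Ideal.sum_mem _ fun c _ => Ideal.mul_mem_mul (ih a c) ?_
      exact RingHom.mem_ker.mpr (congrFun (congrFun hM c) b)
  ext a b
  simpa [hk] using hentries k a b

theorem map_aeval (f : S →+* T) (M : Matrix (Fin N) (Fin N) S) (P : S[X]) :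
    (aeval M P).map f = aeval (M.map f) (P.map f) := by
  refine map_aeval_eq_aeval_map (φ := f) (ψ := f.mapMatrix) ?_ P M
  ext a i j
  simp [algebraMap_matrix_apply, apply_ite f]

def krylov (β : Matrix (Fin N) (Fin N) S) (v : Fin N → S) : Matrix (Fin N) (Fin N) S :=
  of fun i j => (β ^ (j : ℕ) *ᵥ v) i

theorem krylov_mulVec (β : Matrix (Fin N) (Fin N) S) (v c : Fin N → S) :
    krylov β v *ᵥ c = aeval β (∑ j : Fin N, monomial (j : ℕ) (c j)) *ᵥ v := by
  simp only [map_sum, aeval_monomial, ← Algebra.smul_def, sum_mulVec, smul_mulVec]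
  funext i
  simp [krylov, mulVec, dotProduct, mul_comm]

theorem mul_krylov {β g : Matrix (Fin N) (Fin N) S} (hg : Commute g β) (v : Fin N → S) :
    g * krylov β v = krylov β (g *ᵥ v) := by
  ext i j
  rw [mul_apply]
  simp only [krylov, of_apply]
  rw [mulVec_mulVec, ← (hg.pow_right j).eq, ← mulVec_mulVec]
  rfl

theorem krylov_map (f : S →+* T) (β : Matrix (Fin N) (Fin N) S) (v : Fin N → S) :
    (krylov β v).map f = krylov (β.map f) (f ∘ v) := by
  ext i j
  simp only [krylov, map_apply, of_apply, RingHom.map_mulVec, ← RingHom.mapMatrix_apply, map_pow]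

theorem isUnit_det_krylov {β : Matrix (Fin N) (Fin N) F} (hβ : Irreducible β.charpoly)
    {v : Fin N → F} (hv : v ≠ 0) : IsUnit (krylov β v).det := by
  rw [isUnit_iff_ne_zero]
  intro hdet
  obtain ⟨c, hc0, hc⟩ := exists_mulVec_eq_zero_iff.mpr hdet
  set p := (degreeLTEquiv F N).symm c
  have hp0 : (p : F[X]) ≠ 0 := by simpa [p] using hc0
  have hpv : aeval β (p : F[X]) *ᵥ v = 0 := by rw [← hc, krylov_mulVec]; rfl
  have hndvd : ¬ β.charpoly ∣ p := fun hdvd =>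
    hp0 (eq_zero_of_dvd_of_degree_lt hdvd (by
      rw [charpoly_degree_eq_dim, Fintype.card_fin]; exact mem_degreeLT.mp p.2))
  obtain ⟨u, w, huw⟩ := (hβ.coprime_iff_not_dvd).mpr hndvd
  have hwp : aeval β w * aeval β (p : F[X]) = 1 := by
    simpa [aeval_self_charpoly] using congrArg (aeval β) huw
  apply hv
  rw [← one_mulVec v, ← hwp, ← mulVec_mulVec, hpv, mulVec_zero]

theorem exists_eq_aeval_of_commute (φ : S →+* F) [IsLocalHom φ]
    {β g : Matrix (Fin N) (Fin N) S} (hirr : Irreducible (β.charpoly.map φ))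
    (hg : Commute g β) : ∃ P : S[X], g = aeval β P := by
  have hN : 0 < N := by
    simpa [← charpoly_map] using hirr.natDegree_pos
  set v : Fin N → S := Pi.single ⟨0, hN⟩ 1
  have hK : IsUnit (krylov β v).det := by
    refine isUnit_of_map_unit φ _ ?_
    rw [RingHom.map_det, RingHom.mapMatrix_apply, krylov_map]
    refine isUnit_det_krylov (by rwa [charpoly_map]) fun h => ?_
    simpa [v] using congrFun h ⟨0, hN⟩
  set c := (krylov β v)⁻¹ *ᵥ (g *ᵥ v)
  set P := ∑ j : Fin N, monomial (j : ℕ) (c j)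
  have hA : Commute (aeval β P) β :=
    (Algebra.commute_of_mem_adjoin_self (aeval_mem_adjoin_singleton S β)).symm
  have hAv : aeval β P *ᵥ v = g *ᵥ v := by
    rw [← krylov_mulVec, mulVec_mulVec, mul_nonsing_inv _ hK, one_mulVec]
  refine ⟨P, ((isUnit_iff_isUnit_det _).mpr hK).mul_left_injective ?_⟩
  show g * krylov β v = aeval β P * krylov β v
  -- `g` and `aeval β P` agree on `v`, hence on the columns `β ^ j *ᵥ v` of the Krylov matrix
  rw [mul_krylov hg, mul_krylov hA, hAv]

theorem exists_map_eq_map_aeval_of_commute (π : S →+* T) (hπ : Function.Surjective π)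
    (φ : T →+* F) [IsLocalHom φ] {β g : Matrix (Fin N) (Fin N) S}
    (hirr : Irreducible ((β.map π).charpoly.map φ)) (hg : Commute (g.map π) (β.map π)) :
    ∃ P : S[X], g.map π = (aeval β P).map π := by
  obtain ⟨Q, hQ⟩ := exists_eq_aeval_of_commute φ hirr hg
  obtain ⟨P, rfl⟩ := map_surjective π hπ Q
  exact ⟨P, by rw [hQ, map_aeval]⟩

end Matrix

section Factorization

variable {R S F : Type*} [CommRing R] [CommRing S] [Field F] {n : ℕ}
  {β : Matrix (Fin (2*n)) (Fin (2*n)) R}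

theorem exists_mem_adjoin_map_eq (h2 : IsUnit (2 : R)) (hβ : β ∈ spSet n R)
    (π : R →+* S) (hπ : RingHom.ker π ^ 3 = ⊥) {g : Matrix (Fin (2*n)) (Fin (2*n)) R}
    (hg : g ∈ SpSet n R) {P : R[X]} (hgP : g.map π = (aeval β P).map π) :
    ∃ t ∈ SpSet n R, t ∈ Algebra.adjoin R {β} ∧ t.map π = g.map π := by
  obtain ⟨h, hh⟩ := h2.exists_right_inv
  set E := P * P.comp (-X) - 1
  have hE : E.comp (-X) = E := by simp [E, comp_assoc, mul_comm]
  have he : (aeval β E).map π = 0 :=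
    calc (aeval β E).map π = (aeval β P * sympAdjoint (aeval β P) - 1).map π := by
          simp [E, sympAdjoint_aeval hβ]
      _ = (g * sympAdjoint g - 1).map π := by
          simp only [← RingHom.mapMatrix_apply, map_sub, map_mul, map_one]
          simp only [RingHom.mapMatrix_apply, sympAdjoint_map, hgP]
      _ = 0 := by simp [mem_SpSet_iff.mp hg]
  have he3 : aeval β E ^ 3 = 0 := pow_eq_zero_of_map_eq_zero π hπ he
  -- `aeval β (P * s) = aeval β P * (1 + aeval β E)^(-1/2)`, exactly by `he3`
  set s := truncInvSqrt (C h) E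
  obtain ⟨w, hw⟩ := one_add_mul_truncInvSqrt_sq (by rw [← C_ofNat, ← C_mul, hh, C_1]) E
  have hs : s.comp (-X) = s := by
    have := map_truncInvSqrt (compRingHom (-X)) (C h) E
    simpa [hE] using this
  refine ⟨aeval β (P * s), ?_, aeval_mem_adjoin_singleton R β, ?_⟩
  · have hPs : P * s * (P * s).comp (-X) = 1 + E ^ 3 * w := by
      rw [mul_comp, hs, ← hw]; ring
    rw [mem_SpSet_iff, sympAdjoint_aeval hβ, ← map_mul, hPs, map_add, map_one, map_mul, map_pow,
      he3, zero_mul, add_zero]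
  · have hPs : P * s = P + P * E * (3 * C h ^ 3 * E - C h) := by
      linear_combination P * truncInvSqrt_sub_one (C h) E
    simp only [hPs, map_add, map_mul, ← RingHom.mapMatrix_apply] at he hgP ⊢
    rw [he, mul_zero, zero_mul, add_zero, hgP]

theorem exists_mul_eq_of_map_eq (h2 : IsUnit (2 : R)) (hβ : β ∈ spSet n R)
    (π : R →+* S) (hπ : RingHom.ker π ^ 3 = ⊥) {g : Matrix (Fin (2*n)) (Fin (2*n)) R}
    (hg : g ∈ SpSet n R) {P : R[X]} (hgP : g.map π = (aeval β P).map π) :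
    ∃ t ∈ SpSet n R, t ∈ Algebra.adjoin R {β} ∧
      ∃ h ∈ SpSet n R, h.map π = 1 ∧ g = t * h := by
  obtain ⟨t, ht, htβ, htg⟩ := exists_mem_adjoin_map_eq h2 hβ π hπ hg hgP
  refine ⟨t, ht, htβ, sympAdjoint t * g, mul_mem_SpSet (sympAdjoint_mem_SpSet ht) hg, ?_, ?_⟩
  · rw [Matrix.map_mul, ← htg, ← Matrix.map_mul, sympAdjoint_mul_self_of_mem ht,
      Matrix.map_one _ (map_zero π) (map_one π)]
  · rw [← Matrix.mul_assoc, mem_SpSet_iff.mp ht, Matrix.one_mul]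

theorem commute_map_mul_of_mem_adjoin (π : R →+* S) {t h : Matrix (Fin (2*n)) (Fin (2*n)) R}
    (ht : t ∈ Algebra.adjoin R {β}) (hh : h.map π = 1) :
    Commute ((t * h).map π) (β.map π) := by
  rw [Matrix.map_mul, hh, mul_one]
  exact ((Algebra.commute_of_mem_adjoin_self ht).symm.map π.mapMatrix)

theorem setOf_commute_map_eq_mul (h2 : IsUnit (2 : R)) (hβ : β ∈ spSet n R) (π : R →+* S)
    (hπs : Function.Surjective π) (hπ : RingHom.ker π ^ 3 = ⊥) (φ : S →+* F)
    [IsLocalHom φ] (hirr : Irreducible ((β.map π).charpoly.map φ)) :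
    {g | g ∈ SpSet n R ∧ Commute (g.map π) (β.map π)} =
      {x | ∃ t ∈ SpSet n R, t ∈ Algebra.adjoin R {β} ∧
        ∃ h ∈ SpSet n R, h.map π = 1 ∧ x = t * h} := by
  ext g
  constructor
  · rintro ⟨hg, hcomm⟩
    obtain ⟨P, hP⟩ := exists_map_eq_map_aeval_of_commute π hπs φ hirr hcomm
    exact exists_mul_eq_of_map_eq h2 hβ π hπ hg hP
  · rintro ⟨t, ht, htβ, h, hh, hh1, rfl⟩
    exact ⟨mul_mem_SpSet ht hh, commute_map_mul_of_mem_adjoin π htβ hh1⟩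

end Factorization

section Quotient

variable {O : Type*} [CommRing O] {I J : Ideal O}

theorem isLocalHom_factor [IsLocalRing O] (hIJ : I ≤ J) (hJ : J ≠ ⊤) :
    IsLocalHom (Ideal.Quotient.factor hIJ) := by
  have := Ideal.Quotient.nontrivial_iff.mpr hJ
  have := Ideal.Quotient.nontrivial_iff.mpr (ne_top_of_le_ne_top hJ hIJ)
  have := IsLocalRing.of_surjective' (Ideal.Quotient.mk I) Ideal.Quotient.mk_surjective
  exact IsLocalHom.of_surjective _ (Ideal.Quotient.factor_surjective hIJ)

theorem ker_factor_pow_eq_bot (hIJ : I ≤ J) {k : ℕ} (hk : J ^ k ≤ I) :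
    RingHom.ker (Ideal.Quotient.factor hIJ) ^ k = ⊥ := by
  rw [Ideal.Quotient.factor_ker, ← Ideal.map_pow, Ideal.map_eq_bot_iff_le_ker, Ideal.mk_ker]
  exact hk

theorem span_singleton_pow_le (ϖ : O) {k m : ℕ} (h : m ≤ k) :
    Ideal.span {ϖ ^ k} ≤ Ideal.span {ϖ ^ m} :=
  Ideal.span_singleton_le_span_singleton.mpr (pow_dvd_pow ϖ h)

theorem forall_sub_apply_mem_span_iff {m : Type*} {x : O} (hI : I ≤ Ideal.span {x})
    (M M' : Matrix m m (O ⧸ I)) :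
    (∀ a b, (M - M') a b ∈ Ideal.span {Ideal.Quotient.mk I x}) ↔
      M.map (Ideal.Quotient.factor hI) = M'.map (Ideal.Quotient.factor hI) := by
  simp only [← Matrix.ext_iff, map_apply, ← Set.image_singleton, ← Ideal.map_span,
    ← Ideal.Quotient.factor_ker hI, RingHom.mem_ker, Matrix.sub_apply, map_sub, sub_eq_zero]

theorem two_ne_zero_of_odd_card {K : Type*} [Field K] [Finite K] (h : Odd (Nat.card K)) :
    (2 : K) ≠ 0 := by
  intro h2
  have := Fintype.ofFinite K
  obtain ⟨m, hm⟩ := h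
  have hcard := FiniteField.cast_card_eq_zero K
  rw [← Nat.card_eq_fintype_card, hm] at hcard
  simp [h2] at hcard

theorem isUnit_two_quotient_span_pow [IsLocalRing O] {ϖ : O} (hmax : (Ideal.span {ϖ}).IsMaximal)
    [Finite (O ⧸ Ideal.span {ϖ})] (hodd : Odd (Nat.card (O ⧸ Ideal.span {ϖ}))) {k : ℕ}
    (hk : 0 < k) : IsUnit (2 : O ⧸ Ideal.span {ϖ ^ k}) := by
  let := Ideal.Quotient.field (Ideal.span {ϖ})
  have hle : Ideal.span {ϖ ^ k} ≤ Ideal.span {ϖ} := by simpa using span_singleton_pow_le ϖ hk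
  have := isLocalHom_factor hle hmax.ne_top
  refine isUnit_of_map_unit (Ideal.Quotient.factor hle) 2 ?_
  rw [map_ofNat]
  exact (two_ne_zero_of_odd_card hodd).isUnit

end Quotient

theorem stmt14_general (n : ℕ)
    (O : Type*) [CommRing O] [IsDomain O] [IsDiscreteValuationRing O]
    (ϖ : O) (hϖ : Irreducible ϖ)
    [Finite (O ⧸ Ideal.span {ϖ})] (q : ℕ)
    (hq : Nat.card (O ⧸ Ideal.span {ϖ}) = q) (hodd : Odd q)
    (β : Matrix (Fin (2*n)) (Fin (2*n)) O) (hβ : β ∈ spSet n O)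
    (hirr : Irreducible (β.charpoly.map (Ideal.Quotient.mk (Ideal.span {ϖ}))))
    (r l l' : ℕ) (hrll : r = l + l') (hl' : 0 < l')
    (hlmin : l ≤ l' + 1) :
    {g | g ∈ SpSet n (O ⧸ Ideal.span {ϖ^r}) ∧
        ∀ a b : Fin (2*n),
          (g * β.map (Ideal.Quotient.mk (Ideal.span {ϖ^r}))
            - β.map (Ideal.Quotient.mk (Ideal.span {ϖ^r})) * g) a b
            ∈ Ideal.span {Ideal.Quotient.mk (Ideal.span {ϖ^r}) (ϖ^l')}}
      = {x | ∃ t ∈ SpSet n (O ⧸ Ideal.span {ϖ^r}),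
          t ∈ Algebra.adjoin (O ⧸ Ideal.span {ϖ^r})
              {β.map (Ideal.Quotient.mk (Ideal.span {ϖ^r}))} ∧
          ∃ h ∈ SpSet n (O ⧸ Ideal.span {ϖ^r}),
            (∀ a b : Fin (2*n),
              (h - 1) a b ∈ Ideal.span {Ideal.Quotient.mk (Ideal.span {ϖ^r}) (ϖ^l')}) ∧
            x = t * h} := by
  have hrl := span_singleton_pow_le ϖ (show l' ≤ r by omega)
  have hl'1 : Ideal.span {ϖ ^ l'} ≤ Ideal.span {ϖ} := by simpa using span_singleton_pow_le ϖ hl'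
  have hmax : (Ideal.span {ϖ}).IsMaximal :=
    hϖ.maximalIdeal_eq ▸ IsLocalRing.maximalIdeal.isMaximal O
  let := Ideal.Quotient.field (Ideal.span {ϖ})
  have := isLocalHom_factor hl'1 hmax.ne_top
  have hπ : RingHom.ker (Ideal.Quotient.factor hrl) ^ 3 = ⊥ := by
    refine ker_factor_pow_eq_bot hrl ?_
    rw [Ideal.span_singleton_pow, ← pow_mul]
    exact span_singleton_pow_le ϖ (by omega)
  have hirr' : Irreducible (((β.map (Ideal.Quotient.mk _)).map
      (Ideal.Quotient.factor hrl)).charpoly.map (Ideal.Quotient.factor hl'1)) := by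
    rwa [charpoly_map, charpoly_map, Polynomial.map_map, Polynomial.map_map, RingHom.comp_assoc,
      Ideal.Quotient.factor_comp_mk, Ideal.Quotient.factor_comp_mk]
  simp only [forall_sub_apply_mem_span_iff hrl, Matrix.map_mul,
    Matrix.map_one _ (map_zero _) (map_one _)]
  exact setOf_commute_map_eq_mul (isUnit_two_quotient_span_pow hmax (hq ▸ hodd) (by omega))
    (map_mem_spSet _ hβ) _ (Ideal.Quotient.factor_surjective hrl) hπ _ hirr'

/-- For `r = l + l' > 1` with `0 < l' ≤ l ≤ l' + 1`, the set
`{g ∈ Sp_{2n}(O/ϖ^r O) : g·β̄ ≡ β̄·g (mod ϖ^{l'})}` equals the set of products `t·h`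
with `t ∈ Sp_{2n}(O/ϖ^r O)` lying in the subring of `M_{2n}(O/ϖ^r O)` generated by `β̄`
and `h ∈ Sp_{2n}(O/ϖ^r O)` with `h ≡ 1 (mod ϖ^{l'})`. -/
theorem stmt14 (n : ℕ) (hn : 1 ≤ n)
    (O : Type*) [CommRing O] [IsDomain O] [IsDiscreteValuationRing O]
    (ϖ : O) (hϖ : Irreducible ϖ) [IsAdicComplete (Ideal.span {ϖ}) O]
    [Finite (O ⧸ Ideal.span {ϖ})] (q : ℕ)
    (hq : Nat.card (O ⧸ Ideal.span {ϖ}) = q) (hodd : Odd q)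
    (β : Matrix (Fin (2*n)) (Fin (2*n)) O) (hβ : β ∈ spSet n O)
    (hirr : Irreducible (β.charpoly.map (Ideal.Quotient.mk (Ideal.span {ϖ}))))
    (r l l' : ℕ) (hr : 1 < r) (hrll : r = l + l') (hl' : 0 < l') (hl'l : l' ≤ l)
    (hlmin : l ≤ l' + 1) :
    {g | g ∈ SpSet n (O ⧸ Ideal.span {ϖ^r}) ∧
        ∀ a b : Fin (2*n),
          (g * β.map (Ideal.Quotient.mk (Ideal.span {ϖ^r}))
            - β.map (Ideal.Quotient.mk (Ideal.span {ϖ^r})) * g) a b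
            ∈ Ideal.span {Ideal.Quotient.mk (Ideal.span {ϖ^r}) (ϖ^l')}}
      = {x | ∃ t ∈ SpSet n (O ⧸ Ideal.span {ϖ^r}),
          t ∈ Algebra.adjoin (O ⧸ Ideal.span {ϖ^r})
              {β.map (Ideal.Quotient.mk (Ideal.span {ϖ^r}))} ∧
          ∃ h ∈ SpSet n (O ⧸ Ideal.span {ϖ^r}),
            (∀ a b : Fin (2*n),
              (h - 1) a b ∈ Ideal.span {Ideal.Quotient.mk (Ideal.span {ϖ^r}) (ϖ^l')}) ∧
            x = t * h} :=
  stmt14_general n O ϖ hϖ q hq hodd β hβ hirr r l l' hrll hl' hlmin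
end
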